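/- arXiv:2005.05309 — 2 statements merged into one kernel-verified Lean document; each statement's English description precedes it below -/
import Mathlib

section
/- Fix m ∈ ℕ+ and (t̂, a_{t̂}) ∈ [0,T)×Λ̂_{t̂}, set S_m^{a_{t̂}}(γ_t) := S_m(γ_t, a_{t̂}), and let ∂_{x_i}S_m^{a_{t̂}} denote the first vertical derivative, which at every (t,γ_t) ∈ [t̂,T]×Λ̂^{t̂} equals −6m(‖γ_t−a_{t̂}‖_0^{2m} − |γ_t(t)−a_{t̂}(t̂)|^{2m})² |γ_t(t)−a_{t̂}(t̂)|^{2m−2} ((γ_t)_i(t)−(a_{t̂})_i(t̂)) / ‖γ_t−a_{t̂}‖_0^{4m} if ‖γ_t−a_{t̂}‖_0 ≠ 0 and 0 otherwise. Then for all i, j ∈ {1,…,d} and every (t,γ_t) ∈ [t̂,T]×Λ̂^{t̂}, the limit ∂_{x_j x_i}S_m^{a_{t̂}}(γ_t) = lim_{h→0}(∂_{x_i}S_m^{a_{t̂}}(γ_t^{h e_j}) − ∂_{x_i}S_m^{a_{t̂}}(γ_t))/h exists and, writing v = γ_t(t)−a_{t̂}(t̂), N = ‖γ_t−a_{t̂}‖_0,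 equals [24m²(N^{2m} − |v|^{2m})|v|^{4m−4} v_i v_j − 12m(m−1)(N^{2m} − |v|^{2m})² |v|^{2m−4} v_i v_j − 6m(N^{2m} − |v|^{2m})² |v|^{2m−2} 1_{i=j}] / N^{4m} when N ≠ 0, and equals 0 when N = 0 (powers |x|^0 interpreted as 1, and terms with coefficient 0 omitted). -/
set_option linter.unusedVariables false

noncomputable section

open Set Filter Topology

namespace PHJB

/-- Euclidean state space ℝ^d. -/
abbrev E (d : ℕ) : Type := EuclideanSpace ℝ (Fin d)

variable {d n : ℕ}

/-- `‖γ_t - η_s‖₀ = sup_{0 ≤ l ≤ t ∨ s} |γ_t(l ∧ t) - η_s(l ∧ s)|`. -/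
def pairDist (t : ℝ) (γ : ℝ → E d) (s : ℝ) (η : ℝ → E d) : ℝ :=
  sSup ((fun l => ‖γ (min l t) - η (min l s)‖) '' Icc 0 (max t s))

/-- `‖γ_t‖₀ = sup_{0 ≤ s ≤ t} |γ_t(s)|`. -/
def supNorm (t : ℝ) (γ : ℝ → E d) : ℝ :=
  sSup ((fun l => ‖γ l‖) '' Icc 0 t)

/-- `d_∞(γ_t, η_s) = |t - s| + ‖γ_t - η_s‖₀`. -/
def dInfty (t : ℝ) (γ : ℝ → E d) (s : ℝ) (η : ℝ → E d) : ℝ :=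
  |t - s| + pairDist t γ s η

/-- `γ` is càdlàg on `[0,t]`. -/
def IsCadlagOn (t : ℝ) (γ : ℝ → E d) : Prop :=
  (∀ s ∈ Ico (0:ℝ) t, ContinuousWithinAt γ (Ici s) s) ∧
  (∀ s ∈ Ioc (0:ℝ) t, ∃ L, Tendsto γ (nhdsWithin s (Iio s)) (nhds L))

/-- `γ` is continuous on `[0,t]`. -/
def IsContOn (t : ℝ) (γ : ℝ → E d) : Prop :=
  ContinuousOn γ (Icc 0 t)

/-- `(t, γ)` represents an element `γ_t` of `Λ̂^{tBase}` (horizon `T`). -/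
def MemHat (T tBase : ℝ) (t : ℝ) (γ : ℝ → E d) : Prop :=
  tBase ≤ t ∧ t ≤ T ∧ IsCadlagOn t γ

/-- `(t, γ)` represents an element `γ_t` of `Λ^{tBase}` (horizon `T`). -/
def Mem (T tBase : ℝ) (t : ℝ) (γ : ℝ → E d) : Prop :=
  tBase ≤ t ∧ t ≤ T ∧ IsContOn t γ

/-- The functional `S_m(γ_t, η_s)`. -/
def Sm (m : ℕ) (t : ℝ) (γ : ℝ → E d) (s : ℝ) (η : ℝ → E d) : ℝ :=
  if pairDist t γ s η = 0 then 0
  else (pairDist t γ s η ^ (2*m) - ‖γ t - η s‖ ^ (2*m)) ^ 3 / pairDist t γ s η ^ (4*m)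

/-- `Υ^{m,M}(γ_t, η_s) = S_m(γ_t,η_s) + M |γ_t(t) - η_s(s)|^{2m}`. -/
def Ups (m : ℕ) (M : ℝ) (t : ℝ) (γ : ℝ → E d) (s : ℝ) (η : ℝ → E d) : ℝ :=
  Sm m t γ s η + M * ‖γ t - η s‖ ^ (2*m)

/-- `Ῡ^{m,M}(γ_t, η_s) = Υ^{m,M}(γ_t,η_s) + |s - t|²`. -/
def UpsBar (m : ℕ) (M : ℝ) (t : ℝ) (γ : ℝ → E d) (s : ℝ) (η : ℝ → E d) : ℝ :=
  Ups m M t γ s η + (s - t) ^ 2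

/-- `Υ^{m,M}(γ_t) = Υ^{m,M}(γ_t, 0_t)`. -/
def Ups0 (m : ℕ) (M : ℝ) (t : ℝ) (γ : ℝ → E d) : ℝ :=
  Ups m M t γ t (fun _ => 0)

/-- Restriction of a raw function to the values it takes on `[0,t]` (the path `γ_t`,
or its horizontal extension to any later time). -/
def clamp (t : ℝ) (γ : ℝ → E d) : ℝ → E d := fun s => γ (min (max s 0) t)

/-- The horizontal extension `γ_{t,·}` of `γ_t`, as a raw function. -/
def hext (t : ℝ) (γ : ℝ → E d) : ℝ → E d := fun l => γ (min l t)

/-- The vertically bumped path `γ_t^x`. -/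
def vbump (t : ℝ) (γ : ℝ → E d) (x : E d) : ℝ → E d :=
  fun s => if s = t then γ t + x else γ s

/-- The standard basis of ℝ^d. -/
def basis (d : ℕ) (i : Fin d) : E d := EuclideanSpace.single i (1:ℝ)

/-- A path functional only depends on the restriction of the path to `[0,t]`. -/
def Adapted (T tBase : ℝ) (f : ℝ → (ℝ → E d) → ℝ) : Prop :=
  ∀ t γ, MemHat T tBase t γ → f t γ = f t (clamp t γ)

/-- `f ∈ C⁰(Λ̂^{tBase})`: continuity with respect to `d_∞`. -/
def C0Hat (T tBase : ℝ) (f : ℝ → (ℝ → E d) → ℝ) : Prop :=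
  ∀ t γ, MemHat T tBase t γ → ∀ ε > 0, ∃ δ > 0, ∀ s η, MemHat T tBase s η →
    dInfty t γ s η < δ → |f s η - f t γ| < ε

/-- `f ∈ C⁰(Λ^{tBase})`: continuity with respect to `d_∞` on continuous paths. -/
def C0Lam (T tBase : ℝ) (f : ℝ → (ℝ → E d) → ℝ) : Prop :=
  ∀ t γ, Mem T tBase t γ → ∀ ε > 0, ∃ δ > 0, ∀ s η, Mem T tBase s η →
    dInfty t γ s η < δ → |f s η - f t γ| < ε

/-- Polynomial growth in `‖·‖₀`. -/
def PolyGrowth (T tBase : ℝ) (f : ℝ → (ℝ → E d) → ℝ) : Prop :=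
  ∃ C : ℝ, ∃ k : ℕ, 0 ≤ C ∧ ∀ t γ, MemHat T tBase t γ →
    |f t γ| ≤ C * (1 + supNorm t γ) ^ k

/-- An element of `C_p^{1,2}(Λ̂^{tBase})`: a functional `F` together with its
horizontal derivative `Ft`, and first and second vertical derivatives `Fx`, `Fxx`,
all continuous in `d_∞` and of polynomial growth. -/
structure C12pHat (d : ℕ) (T tBase : ℝ) where
  F : ℝ → (ℝ → E d) → ℝ
  Ft : ℝ → (ℝ → E d) → ℝ
  Fx : ℝ → (ℝ → E d) → E d
  Fxx : ℝ → (ℝ → E d) → Matrix (Fin d) (Fin d) ℝ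
  adapted : Adapted T tBase F
  contF : C0Hat T tBase F
  vert : ∀ t γ, MemHat T tBase t γ → ∀ i : Fin d,
    HasDerivAt (fun h : ℝ => F t (vbump t γ (h • basis d i))) (Fx t γ i) 0
  vert2 : ∀ t γ, MemHat T tBase t γ → ∀ i j : Fin d,
    HasDerivAt (fun h : ℝ => Fx t (vbump t γ (h • basis d j)) i) (Fxx t γ j i) 0
  horiz : ∀ t γ, MemHat T tBase t γ → t < T →
    Tendsto (fun h : ℝ => (F (t + h) (clamp t γ) - F t γ) / h)
      (nhdsWithin 0 (Ioi 0)) (nhds (Ft t γ))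
  horizT : ∀ γ, MemHat T tBase T γ →
    Tendsto (fun s => Ft s (clamp s γ)) (nhdsWithin T (Iio T)) (nhds (Ft T γ))
  contFt : C0Hat T tBase Ft
  contFx : ∀ i : Fin d, C0Hat T tBase fun t γ => Fx t γ i
  contFxx : ∀ i j : Fin d, C0Hat T tBase fun t γ => Fxx t γ i j
  growthF : PolyGrowth T tBase F
  growthFt : PolyGrowth T tBase Ft
  growthFx : ∀ i : Fin d, PolyGrowth T tBase fun t γ => Fx t γ i
  growthFxx : ∀ i j : Fin d, PolyGrowth T tBase fun t γ => Fxx t γ i j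

/-- Hilbert–Schmidt (Frobenius) norm of a matrix. -/
def frob {k l : ℕ} (A : Matrix (Fin k) (Fin l) ℝ) : ℝ :=
  Real.sqrt (∑ i, ∑ j, (A i j) ^ 2)

/-- Identification of `Fin k → ℝ` with `EuclideanSpace ℝ (Fin k)`. -/
def toEuc {k : ℕ} (v : Fin k → ℝ) : E k := (WithLp.equiv 2 (Fin k → ℝ)).symm v

/-- The Hamiltonian
`H(γ_t,r,p,l) = sup_u [⟨p, b⟩ + ½ tr(l σ σ^⊤) + q(γ_t, r, σ^⊤ p, u)]`. -/
def hamiltonian (U : Type*) (b : ℝ → (ℝ → E d) → U → E d)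
    (σ' : ℝ → (ℝ → E d) → U → Matrix (Fin d) (Fin n) ℝ)
    (q : ℝ → (ℝ → E d) → ℝ → E n → U → ℝ)
    (t : ℝ) (γ : ℝ → E d) (r : ℝ) (p : E d) (l : Matrix (Fin d) (Fin d) ℝ) : ℝ :=
  ⨆ u : U, ((∑ i, p i * b t γ u i)
    + (1/2) * Matrix.trace (l * (σ' t γ u * (σ' t γ u).transpose))
    + q t γ r (toEuc ((σ' t γ u).transpose.mulVec (fun i => p i))) u)

/-- Hypothesis 2.1 on the coefficients, with Lipschitz/growth constant `L`. -/
structure Hyp (T : ℝ) {d n : ℕ} (U : Type*) [MetricSpace U] (L : ℝ)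
    (b : ℝ → (ℝ → E d) → U → E d)
    (σ' : ℝ → (ℝ → E d) → U → Matrix (Fin d) (Fin n) ℝ)
    (q : ℝ → (ℝ → E d) → ℝ → E n → U → ℝ)
    (φ : (ℝ → E d) → ℝ) : Prop where
  hL : 0 < L
  cont_b : ∀ t γ u, Mem T 0 t γ → ∀ ε > 0, ∃ δ > 0, ∀ s η v, Mem T 0 s η →
    dInfty t γ s η + dist u v < δ → ‖b s η v - b t γ u‖ < ε
  cont_σ : ∀ t γ u, Mem T 0 t γ → ∀ ε > 0, ∃ δ > 0, ∀ s η v, Mem T 0 s η →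
    dInfty t γ s η + dist u v < δ → frob (σ' s η v - σ' t γ u) < ε
  cont_q : ∀ t γ (y : ℝ) (z : E n) u, Mem T 0 t γ → ∀ ε > 0, ∃ δ > 0,
    ∀ s η (y' : ℝ) (z' : E n) v, Mem T 0 s η →
      dInfty t γ s η + |y' - y| + ‖z' - z‖ + dist u v < δ →
      |q s η y' z' v - q t γ y z u| < ε
  cont_φ : ∀ γ, IsContOn T γ → ∀ ε > 0, ∃ δ > 0, ∀ η, IsContOn T η →
    pairDist T γ T η < δ → |φ η - φ γ| < ε
  bound_b : ∀ t γ u, Mem T 0 t γ → ‖b t γ u‖ ^ 2 ≤ L ^ 2 * (1 + supNorm t γ ^ 2)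
  bound_σ : ∀ t γ u, Mem T 0 t γ → frob (σ' t γ u) ^ 2 ≤ L ^ 2 * (1 + supNorm t γ ^ 2)
  lip_b : ∀ t γ γ' u, Mem T 0 t γ → Mem T 0 t γ' →
    ‖b t γ u - b t γ' u‖ ≤ L * pairDist t γ t γ'
  lip_σ : ∀ t γ γ' u, Mem T 0 t γ → Mem T 0 t γ' →
    frob (σ' t γ u - σ' t γ' u) ≤ L * pairDist t γ t γ'
  bound_q : ∀ t γ y z u, Mem T 0 t γ → |q t γ y z u| ≤ L * (1 + supNorm t γ + |y| + ‖z‖)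
  lip_q : ∀ t γ γ' y y' z z' u, Mem T 0 t γ → Mem T 0 t γ' →
    |q t γ y z u - q t γ' y' z' u| ≤ L * (pairDist t γ t γ' + |y - y'| + ‖z - z'‖)
  lip_φ : ∀ γ η, IsContOn T γ → IsContOn T η → |φ γ - φ η| ≤ L * pairDist T γ T η

/-- `Φ ∈ A⁺(γ_t, w)`: `0 = (w - Φ)(γ_t) = sup_{[t,T]×Λ} (w - Φ)`. -/
def InAplus (T t : ℝ) (w : ℝ → (ℝ → E d) → ℝ) (γ : ℝ → E d) (Φ : C12pHat d T t) : Prop :=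
  w t γ - Φ.F t γ = 0 ∧ ∀ s η, Mem T t s η → w s η - Φ.F s η ≤ 0

/-- `Φ ∈ A⁻(γ_t, w)`: `0 = (w + Φ)(γ_t) = inf_{[t,T]×Λ} (w + Φ)`. -/
def InAminus (T t : ℝ) (w : ℝ → (ℝ → E d) → ℝ) (γ : ℝ → E d) (Φ : C12pHat d T t) : Prop :=
  w t γ + Φ.F t γ = 0 ∧ ∀ s η, Mem T t s η → 0 ≤ w s η + Φ.F s η

/-- Viscosity subsolution of the PHJB equation. -/
def IsViscSubsol (T : ℝ) (U : Type*)
    (b : ℝ → (ℝ → E d) → U → E d)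
    (σ' : ℝ → (ℝ → E d) → U → Matrix (Fin d) (Fin n) ℝ)
    (q : ℝ → (ℝ → E d) → ℝ → E n → U → ℝ)
    (φ : (ℝ → E d) → ℝ)
    (w : ℝ → (ℝ → E d) → ℝ) : Prop :=
  (∀ γ, IsContOn T γ → w T γ ≤ φ γ) ∧
  ∀ t γ, Mem T 0 t γ → t < T → ∀ Φ : C12pHat d T t,
    InAplus T t w γ Φ →
    0 ≤ Φ.Ft t γ + hamiltonian U b σ' q t γ (Φ.F t γ) (Φ.Fx t γ) (Φ.Fxx t γ)

/-- Viscosity supersolution of the PHJB equation. -/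
def IsViscSupersol (T : ℝ) (U : Type*)
    (b : ℝ → (ℝ → E d) → U → E d)
    (σ' : ℝ → (ℝ → E d) → U → Matrix (Fin d) (Fin n) ℝ)
    (q : ℝ → (ℝ → E d) → ℝ → E n → U → ℝ)
    (φ : (ℝ → E d) → ℝ)
    (w : ℝ → (ℝ → E d) → ℝ) : Prop :=
  (∀ γ, IsContOn T γ → φ γ ≤ w T γ) ∧
  ∀ t γ, Mem T 0 t γ → t < T → ∀ Φ : C12pHat d T t,
    InAminus T t w γ Φ →
    -Φ.Ft t γ + hamiltonian U b σ' q t γ (-(Φ.F t γ)) (-(Φ.Fx t γ)) (-(Φ.Fxx t γ)) ≤ 0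

/-- Gauge-type function on `Λ^{tBase}`. -/
def IsGaugeType (T tBase : ℝ) (ρ : ℝ → (ℝ → E d) → ℝ → (ℝ → E d) → ℝ) : Prop :=
  (∀ t γ s η, Mem T tBase t γ → Mem T tBase s η → 0 ≤ ρ t γ s η) ∧
  (∀ t γ s η, Mem T tBase t γ → Mem T tBase s η → ∀ ε > 0, ∃ δ > 0,
    ∀ t' γ' s' η', Mem T tBase t' γ' → Mem T tBase s' η' →
      dInfty t γ t' γ' + dInfty s η s' η' < δ →
      |ρ t' γ' s' η' - ρ t γ s η| < ε) ∧
  (∀ s γ, Mem T tBase s γ → ρ s γ s γ = 0) ∧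
  (∀ ε > 0, ∃ δ > 0, ∀ s γ l η, Mem T tBase s γ → Mem T tBase l η →
    ρ s γ l η ≤ δ → dInfty s γ l η < ε)

/-- Upper semicontinuity (w.r.t. `d_∞`) of a path functional. -/
def PathUSC (T tBase : ℝ) (w : ℝ → (ℝ → E d) → ℝ) : Prop :=
  ∀ t γ, Mem T tBase t γ → ∀ c, w t γ < c → ∃ δ > 0, ∀ s η, Mem T tBase s η →
    dInfty t γ s η < δ → w s η < c

/-- Bounded from above. -/
def BddAbovePath (T tBase : ℝ) (w : ℝ → (ℝ → E d) → ℝ) : Prop :=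
  ∃ B, ∀ t γ, Mem T tBase t γ → w t γ ≤ B

/-- `limsup_{‖γ_t‖₀ → ∞} w(γ_t)/‖γ_t‖₀ < 0`. -/
def NegAtInfty (T : ℝ) (w : ℝ → (ℝ → E d) → ℝ) : Prop :=
  ∃ c > 0, ∃ R : ℝ, ∀ t γ, Mem T 0 t γ → R ≤ supNorm t γ → w t γ ≤ -c * supNorm t γ

/-- The function `w̃^{t̂}` of Definition 5.4. -/
def tilde (T tBase : ℝ) (w : ℝ → (ℝ → E d) → ℝ) : ℝ → E d → ℝ := fun t x =>
  if tBase ≤ t then sSup {r | ∃ ξ, Mem T tBase t ξ ∧ ξ t = x ∧ r = w t ξ}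
  else sSup {r | ∃ ξ, Mem T tBase tBase ξ ∧ ξ tBase = x ∧ r = w tBase ξ} - Real.sqrt (tBase - t)

/-- Upper semicontinuous envelope (on `[0,T] × ℝ^d`). -/
def uscEnv (T : ℝ) (g : ℝ → E d → ℝ) : ℝ → E d → ℝ := fun t x =>
  Filter.limsup (fun p : ℝ × E d => g p.1 p.2)
    (nhdsWithin (t, x) ((Icc (0:ℝ) T) ×ˢ (univ : Set (E d))))

/-- A local modulus of continuity. -/
def IsLocalModulus (ρ₁ : ℝ → ℝ → ℝ) : Prop :=
  Continuous (Function.uncurry ρ₁) ∧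
  (∀ r, 0 ≤ r → ρ₁ 0 r = 0) ∧
  (∀ a r, 0 ≤ a → 0 ≤ r → 0 ≤ ρ₁ a r) ∧
  (∀ a b r, 0 ≤ a → 0 ≤ b → 0 ≤ r → ρ₁ (a + b) r ≤ ρ₁ a r + ρ₁ b r) ∧
  (∀ a r r', 0 ≤ a → 0 ≤ r → r ≤ r' → ρ₁ a r ≤ ρ₁ a r')

/-- `(g, gt, gx, gxx)` is a `C^{1,2}` function on `[0,T] × ℝ^d` together with its
time derivative, spatial gradient and spatial Hessian. -/
def IsC12On (T : ℝ) (g gt : ℝ → E d → ℝ) (gx : ℝ → E d → E d)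
    (gxx : ℝ → E d → Matrix (Fin d) (Fin d) ℝ) : Prop :=
  Continuous (fun p : ℝ × E d => g p.1 p.2) ∧
  Continuous (fun p : ℝ × E d => gt p.1 p.2) ∧
  Continuous (fun p : ℝ × E d => gx p.1 p.2) ∧
  Continuous (fun p : ℝ × E d => gxx p.1 p.2) ∧
  (∀ t x, HasDerivAt (fun s => g s x) (gt t x) t) ∧
  (∀ t x (i : Fin d), HasDerivAt (fun h : ℝ => g t (x + h • basis d i)) (gx t x i) 0) ∧
  (∀ t x (i j : Fin d),
    HasDerivAt (fun h : ℝ => gx t (x + h • basis d j) i) (gxx t x j i) 0)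

/-- The class `Φ(t̂, x̂)` of Definition 5.3. -/
def InPhiClass (T : ℝ) (that : ℝ) (xhat : E d) (f : ℝ → E d → ℝ) : Prop :=
  ∃ r > 0, ∀ L > 0, ∀ g gt gx gxx, IsC12On T g gt gx gxx →
    ∃ C > 0, ∀ t x, 0 < t → t < T →
      (∀ s y, 0 ≤ s → s ≤ T → f s y - g s y ≤ f t x - g t x) →
      (|t - that| + ‖x - xhat‖ < r ∧ |f t x| + ‖gx t x‖ + frob (gxx t x) ≤ L) →
      C ≤ gt t x

/-- Bounded and uniformly continuous path functional on `Λ̂^{tBase}`. -/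
def UCBoundedHat (T tBase : ℝ) (f : ℝ → (ℝ → E d) → ℝ) : Prop :=
  (∃ B, ∀ t γ, MemHat T tBase t γ → |f t γ| ≤ B) ∧
  ∀ ε > 0, ∃ δ > 0, ∀ t γ s η, MemHat T tBase t γ → MemHat T tBase s η →
    dInfty t γ s η < δ → |f t γ - f s η| < ε

/-- Basis of ℝ^d × ℝ^d indexed by `Fin d ⊕ Fin d`. -/
def basisProd (d : ℕ) (v : Fin d ⊕ Fin d) : E d × E d :=
  Sum.elim (fun i => (basis d i, 0)) (fun j => (0, basis d j)) v

/-- The full Hessian `∇²φ` of `φ : ℝ^d × ℝ^d → ℝ` as a `(2d) × (2d)` matrix. -/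
def hess2 (φ : E d × E d → ℝ) (p : E d × E d) :
    Matrix (Fin d ⊕ Fin d) (Fin d ⊕ Fin d) ℝ :=
  Matrix.of fun v w => fderiv ℝ (fun x => fderiv ℝ φ x (basisProd d w)) p (basisProd d v)

/-- `∇_{x₁}φ`. -/
def grad1 (φ : E d × E d → ℝ) (p : E d × E d) : E d :=
  toEuc (fun i => fderiv ℝ φ p (basisProd d (Sum.inl i)))

/-- `∇_{x₂}φ`. -/
def grad2 (φ : E d × E d → ℝ) (p : E d × E d) : E d :=
  toEuc (fun i => fderiv ℝ φ p (basisProd d (Sum.inr i)))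

/-- Operator norm of a matrix, acting on Euclidean space. -/
def matOpNorm {ι : Type*} [Fintype ι] [DecidableEq ι] (A : Matrix ι ι ℝ) : ℝ :=
  ‖LinearMap.toContinuousLinearMap (Matrix.toEuclideanLin A)‖

/-- Matrix order `A ≤ B` in the sense of quadratic forms. -/
def matLE {ι : Type*} [Fintype ι] (A B : Matrix ι ι ℝ) : Prop :=
  (B - A).PosSemidef


/-- The state-dependent Hamiltonian `H̄(t,x,r,p,l)`. -/
def hamBar (U : Type*) {d n : ℕ} (bbar : ℝ → E d → U → E d)
    (σbar : ℝ → E d → U → Matrix (Fin d) (Fin n) ℝ)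
    (qbar : ℝ → E d → ℝ → E n → U → ℝ)
    (t : ℝ) (x : E d) (r : ℝ) (p : E d) (l : Matrix (Fin d) (Fin d) ℝ) : ℝ :=
  ⨆ u : U, ((∑ i, p i * bbar t x u i)
    + (1/2) * Matrix.trace (l * (σbar t x u * (σbar t x u).transpose))
    + qbar t x r (toEuc ((σbar t x u).transpose.mulVec (fun i => p i))) u)

/-!
Let `w = γ_t(t) + x - a_{t̂}(t̂)` and let `Q` be the supremum of `|γ_t(l) - a_{t̂}(l ∧ t̂)|` over
`l < t`. Bumping `γ_t` vertically only moves its endpoint, so `‖γ_t^x - a_{t̂}‖₀ = max(‖w‖, Q)`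
and `max(‖w‖, Q)^{2m} - ‖w‖^{2m} = (Q^{2m} - ‖w‖^{2m})⁺`. The first vertical derivative is thus
`-6m ((Q^{2m} - ‖w‖^{2m})⁺)² ‖w‖^{2m-2} w_i / Q^{4m}` for every `w`, with no case split, and
this is `C¹` in `w` because `u ↦ (u⁺)²` is `C¹` with derivative `2u⁺`. Differentiating in
direction `e_j` and undoing the same rewriting at `x = 0` gives the formula.
-/

theorem hasDerivAt_posPart_sq (x : ℝ) : HasDerivAt (fun y : ℝ => y⁺ ^ 2) (2 * x⁺) x := by
  rcases lt_trichotomy x 0 with hx | rfl | hx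
  · have hev : (fun y : ℝ => y⁺ ^ 2) =ᶠ[𝓝 x] fun _ => 0 := by
      filter_upwards [Iio_mem_nhds hx] with y hy
      simp [posPart_of_nonpos (mem_Iio.1 hy).le]
    simpa [posPart_of_nonpos hx.le] using (hasDerivAt_const x (0 : ℝ)).congr_of_eventuallyEq hev
  · rw [hasDerivAt_iff_isLittleO_nhds_zero]
    simp only [zero_add, posPart_zero, ne_eq, OfNat.ofNat_ne_zero, not_false_eq_true, zero_pow,
      sub_zero, mul_zero, smul_eq_mul]
    refine (Asymptotics.isBigO_of_le _ fun y => ?_).trans_isLittleO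
      (Asymptotics.isLittleO_pow_id one_lt_two)
    simp only [norm_pow, Real.norm_eq_abs]
    refine pow_le_pow_left₀ (abs_nonneg _) ?_ 2
    rw [abs_of_nonneg (posPart_nonneg y)]
    exact sup_le (le_abs_self y) (abs_nonneg y)
  · have hev : (fun y : ℝ => y⁺ ^ 2) =ᶠ[𝓝 x] fun y => y ^ 2 := by
      filter_upwards [Ioi_mem_nhds hx] with y hy
      rw [posPart_of_nonneg (mem_Ioi.1 hy).le]
    simpa [posPart_of_nonneg hx.le] using (hasDerivAt_pow 2 x).congr_of_eventuallyEq hev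

theorem HasDerivAt.posPart_sq {f : ℝ → ℝ} {f' x : ℝ} (hf : HasDerivAt f f' x) :
    HasDerivAt (fun y => (f y)⁺ ^ 2) (2 * (f x)⁺ * f') x :=
  (hasDerivAt_posPart_sq (f x)).comp x hf

theorem sSup_insert_eq_max_sSup_insert_zero {B : Set ℝ} (hbdd : BddAbove B)
    (hB : ∀ b ∈ B, 0 ≤ b) {r : ℝ} (hr : 0 ≤ r) :
    sSup (insert r B) = max r (sSup (insert 0 B)) := by
  rcases B.eq_empty_or_nonempty with rfl | hne
  · simp [max_eq_left hr]
  · obtain ⟨b, hb⟩ := hne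
    rw [csSup_insert hbdd ⟨b, hb⟩, csSup_insert hbdd ⟨b, hb⟩,
      max_eq_right ((hB b hb).trans (le_csSup hbdd hb))]

theorem ite_max_eq_posPart {r Q : ℝ} (hr : 0 ≤ r) (hQ : 0 ≤ Q) (k : ℕ) (F : ℝ → ℝ → ℝ)
    (hF : ∀ N, F 0 N = 0) :
    (if max r Q = 0 then 0 else F (max r Q ^ k - r ^ k) (max r Q)) = F (Q ^ k - r ^ k)⁺ Q := by
  rcases le_or_gt Q r with hle | hlt
  · rw [max_eq_left hle, sub_self, hF, ite_self,
      posPart_of_nonpos (sub_nonpos.2 (pow_le_pow_left₀ hQ hle k)), hF]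
  · rw [max_eq_right hlt.le, if_neg (hr.trans_lt hlt).ne',
      posPart_of_nonneg (sub_nonneg.2 (pow_le_pow_left₀ hr hlt.le k))]

theorem ite_sSup_insert_eq_posPart {B : Set ℝ} (hB : ∀ b ∈ B, 0 ≤ b) {r : ℝ} (hr : 0 ≤ r)
    {k : ℕ} (hk : k ≠ 0) (F : ℝ → ℝ → ℝ) (hF : ∀ N, F 0 N = 0) :
    (if sSup (insert r B) = 0 then 0
      else F (sSup (insert r B) ^ k - r ^ k) (sSup (insert r B)))
      = F (sSup (insert 0 B) ^ k - r ^ k)⁺ (sSup (insert 0 B)) := by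
  by_cases hbdd : BddAbove B
  · rw [sSup_insert_eq_max_sSup_insert_zero hbdd hB hr]
    exact ite_max_eq_posPart hr (le_csSup (hbdd.insert 0) (mem_insert 0 B)) k F hF
  · -- `sSup` of a set unbounded above is `0`, so both sides vanish.
    have hunb (q : ℝ) : sSup (insert q B) = 0 :=
      Real.sSup_of_not_bddAbove fun h => hbdd (h.mono (subset_insert q B))
    rw [hunb, hunb, if_pos rfl, zero_pow hk, zero_sub,
      posPart_of_nonpos (neg_nonpos.2 (pow_nonneg hr k)), hF]

theorem pairDist_vbump {d : ℕ} {that t : ℝ} (h0 : 0 ≤ that) (hle : that ≤ t)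
    (γ a : ℝ → E d) (x : E d) :
    pairDist t (vbump t γ x) that a
      = sSup (insert ‖γ t + x - a that‖ ((fun l => ‖γ l - a (min l that)‖) '' Ico 0 t)) := by
  unfold pairDist
  rw [max_eq_left hle, ← Ico_insert_right (h0.trans hle), image_insert_eq]
  congr 2
  · simp [vbump, min_eq_right hle]
  · refine image_congr fun l hl => ?_
    simp [vbump, min_eq_left hl.2.le, hl.2.ne]

theorem vbump_zero {d : ℕ} (t : ℝ) (γ : ℝ → E d) : vbump t γ 0 = γ := by
  funext s
  by_cases hs : s = t <;> simp [vbump, hs]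

/-- `∂_{x_i} S_m^{a_{t̂}}(γ_t^x)`, written through `w = γ_t(t) + x - a_{t̂}(t̂)` and
`Q = 0 ∨ sup_{l < t} |γ_t(l) - a_{t̂}(l ∧ t̂)|`. -/
def smFirstDeriv {d : ℕ} (m : ℕ) (Q : ℝ) (i : Fin d) (w : E d) : ℝ :=
  -(6 * m) * ((Q ^ (2 * m) - (‖w‖ ^ 2) ^ m)⁺ ^ 2 * (‖w‖ ^ 2) ^ (m - 1) * w i) / Q ^ (4 * m)

theorem hasDerivAt_smFirstDeriv {d m : ℕ} (hm : 0 < m) (Q : ℝ) (i j : Fin d) (v : E d) :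
    HasDerivAt (fun y : ℝ => smFirstDeriv m Q i (v + y • basis d j))
      ((24 * m ^ 2 * (Q ^ (2 * m) - ‖v‖ ^ (2 * m))⁺ * ‖v‖ ^ (4 * m - 4) * v i * v j
        - 12 * m * (m - 1) * (Q ^ (2 * m) - ‖v‖ ^ (2 * m))⁺ ^ 2 * ‖v‖ ^ (2 * m - 4) * v i * v j
        - 6 * m * (Q ^ (2 * m) - ‖v‖ ^ (2 * m))⁺ ^ 2 * ‖v‖ ^ (2 * m - 2)
          * (if i = j then 1 else 0)) / Q ^ (4 * m)) 0 := by
  have hsq : HasDerivAt (fun y : ℝ => ‖v + y • basis d j‖ ^ 2) (2 * v j) 0 := by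
    have := ((hasDerivAt_id (0 : ℝ)).smul_const (basis d j)).const_add v
    simpa [basis, EuclideanSpace.inner_single_right] using this.norm_sq
  have hcoord : HasDerivAt (fun y : ℝ => (v + y • basis d j) i) (if i = j then 1 else 0) 0 := by
    simpa [basis] using (hasDerivAt_mul_const (if i = j then (1 : ℝ) else 0)).const_add (v i)
  have hderiv := ((((HasDerivAt.posPart_sq ((hsq.fun_pow m).const_sub (Q ^ (2 * m)))).fun_mul
    (hsq.fun_pow (m - 1))).fun_mul hcoord).const_mul (-(6 * m : ℝ))).div_const (Q ^ (4 * m))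
  refine hderiv.congr_deriv ?_
  rw [show 4 * m - 4 = 2 * (m - 1) + 2 * (m - 1) by omega, pow_add,
    show 2 * m - 4 = 2 * (m - 1 - 1) by omega, show 2 * m - 2 = 2 * (m - 1) by omega]
  simp only [pow_mul, zero_smul, add_zero, Nat.cast_sub hm, Nat.cast_one]
  ring

theorem Sm_second_vertical_derivative_general
    {d : ℕ} (T : ℝ) (m : ℕ) (hm : 0 < m)
    (that : ℝ) (h0 : 0 ≤ that)
    (a : ℝ → E d)
    (i j : Fin d)
    (g : ℝ → (ℝ → E d) → ℝ)
    (hg : ∀ s η, g s η = if pairDist s η that a = 0 then 0 else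
      -(6 * (m:ℝ)) * (pairDist s η that a ^ (2*m) - ‖η s - a that‖ ^ (2*m)) ^ 2
        * ‖η s - a that‖ ^ (2*m - 2) * (η s i - a that i)
        / pairDist s η that a ^ (4*m))
    (t : ℝ) (γ : ℝ → E d) (h : MemHat T that t γ) :
    HasDerivAt (fun h' : ℝ => g t (vbump t γ (h' • basis d j)))
      (if pairDist t γ that a = 0 then 0 else
        (24 * (m:ℝ)^2 * (pairDist t γ that a ^ (2*m) - ‖γ t - a that‖ ^ (2*m))
            * ‖γ t - a that‖ ^ (4*m - 4) * (γ t i - a that i) * (γ t j - a that j)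
         - 12 * (m:ℝ) * ((m:ℝ) - 1)
            * (pairDist t γ that a ^ (2*m) - ‖γ t - a that‖ ^ (2*m)) ^ 2
            * ‖γ t - a that‖ ^ (2*m - 4) * (γ t i - a that i) * (γ t j - a that j)
         - 6 * (m:ℝ) * (pairDist t γ that a ^ (2*m) - ‖γ t - a that‖ ^ (2*m)) ^ 2
            * ‖γ t - a that‖ ^ (2*m - 2) * (if i = j then (1:ℝ) else 0))
        / pairDist t γ that a ^ (4*m)) 0 := by
  set v : E d := γ t - a that
  set B : Set ℝ := (fun l => ‖γ l - a (min l that)‖) '' Ico 0 t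
  have hB : ∀ b ∈ B, 0 ≤ b := by
    rintro _ ⟨l, -, rfl⟩
    exact norm_nonneg _
  have hdist (x : E d) : pairDist t (vbump t γ x) that a = sSup (insert ‖v + x‖ B) := by
    rw [pairDist_vbump h0 h.1, add_sub_right_comm]
  have hfirst (x : E d) : g t (vbump t γ x) = smFirstDeriv m (sSup (insert 0 B)) i (v + x) := by
    have hend : vbump t γ x t - a that = v + x := by simp [vbump, v, add_sub_right_comm]
    rw [hg, hdist, hend, ← PiLp.sub_apply, hend]
    refine (ite_sSup_insert_eq_posPart hB (norm_nonneg _) (k := 2 * m) (by omega)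
      (fun p N => -(6 * m) * p ^ 2 * ‖v + x‖ ^ (2 * m - 2) * (v + x) i / N ^ (4 * m))
      (by simp)).trans ?_
    simp only [smFirstDeriv, ← pow_mul, Nat.mul_sub_one]
    ring
  rw [show (fun y : ℝ => g t (vbump t γ (y • basis d j))) = _ from funext fun y => hfirst _]
  convert hasDerivAt_smFirstDeriv hm (sSup (insert 0 B)) i j v using 1
  rw [← PiLp.sub_apply, ← PiLp.sub_apply, show γ t - a that = v from rfl,
    show pairDist t γ that a = sSup (insert ‖v‖ B) by simpa [vbump_zero] using hdist 0]
  exact ite_sSup_insert_eq_posPart hB (norm_nonneg v) (k := 2 * m) (by omega)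
    (fun p N => (24 * m ^ 2 * p * ‖v‖ ^ (4 * m - 4) * v i * v j
      - 12 * m * (m - 1) * p ^ 2 * ‖v‖ ^ (2 * m - 4) * v i * v j
      - 6 * m * p ^ 2 * ‖v‖ ^ (2 * m - 2) * (if i = j then 1 else 0)) / N ^ (4 * m)) (by simp)

/-- explicit formula for the second vertical derivative of
`S_m^{a_{t̂}}` (derivative in direction `e_j` of the first vertical derivative in
direction `e_i`). -/
theorem Sm_second_vertical_derivative
    {d : ℕ} (T : ℝ) (hT : 0 < T) (m : ℕ) (hm : 0 < m)
    (that : ℝ) (h0 : 0 ≤ that) (hthatT : that < T)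
    (a : ℝ → E d) (ha : IsCadlagOn that a)
    (i j : Fin d)
    (g : ℝ → (ℝ → E d) → ℝ)
    (hg : ∀ s η, g s η = if pairDist s η that a = 0 then 0 else
      -(6 * (m:ℝ)) * (pairDist s η that a ^ (2*m) - ‖η s - a that‖ ^ (2*m)) ^ 2
        * ‖η s - a that‖ ^ (2*m - 2) * (η s i - a that i)
        / pairDist s η that a ^ (4*m))
    (t : ℝ) (γ : ℝ → E d) (h : MemHat T that t γ) :
    HasDerivAt (fun h' : ℝ => g t (vbump t γ (h' • basis d j)))
      (if pairDist t γ that a = 0 then 0 else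
        (24 * (m:ℝ)^2 * (pairDist t γ that a ^ (2*m) - ‖γ t - a that‖ ^ (2*m))
            * ‖γ t - a that‖ ^ (4*m - 4) * (γ t i - a that i) * (γ t j - a that j)
         - 12 * (m:ℝ) * ((m:ℝ) - 1)
            * (pairDist t γ that a ^ (2*m) - ‖γ t - a that‖ ^ (2*m)) ^ 2
            * ‖γ t - a that‖ ^ (2*m - 4) * (γ t i - a that i) * (γ t j - a that j)
         - 6 * (m:ℝ) * (pairDist t γ that a ^ (2*m) - ‖γ t - a that‖ ^ (2*m)) ^ 2
            * ‖γ t - a that‖ ^ (2*m - 2) * (if i = j then (1:ℝ) else 0))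
        / pairDist t γ that a ^ (4*m)) 0 :=
  Sm_second_vertical_derivative_general T m hm that h0 a i j g hg t γ h
end PHJB
end
end

section
/- For every m ∈ ℕ+, every real M ≥ 3, and every t ∈ [0,T] and γ_t, η_t ∈ Λ̂_t: Υ^{m,M}(γ_t + η_t) ≤ 2^{2m−1}(Υ^{m,M}(γ_t) + Υ^{m,M}(η_t)), where γ_t + η_t denotes the pointwise sum of the two paths. -/
set_option linter.unusedVariables false

noncomputable section

open Set Filter Topology

namespace PHJB

variable {d n : ℕ}

/-!
With `x = ‖ξ_t‖₀^{2m}` and `y = |ξ_t(t)|^{2m}` one has `Υ^{m,M}(ξ_t) = (x - y)³/x² + M y`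
for `0 ≤ y ≤ x`. This profile is nondecreasing in `x`, and also in `y` because the slope
`-3(x - y)²/x² ≥ -3` of the cubic term is compensated by `M ≥ 3`; it is positively
1-homogeneous, and subadditive by Radon's inequality `(a + b)³/(x + y)² ≤ a³/x² + b³/y²`.
For `ξ = γ + η` the triangle inequality and `(a + b)ⁿ ≤ 2ⁿ⁻¹(aⁿ + bⁿ)` bound `x` and `y` by
`2^{2m-1}` times the sums of the corresponding quantities for `γ` and `η`, which gives the
claim. All sup norms are finite since a càdlàg path is locally bounded on the compact `[0, t]`.
-/

theorem _root_.IsCompact.bddAbove_image_of_isBoundedUnder {X : Type*} [TopologicalSpace X]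
    {K : Set X} (hK : IsCompact K) {f : X → ℝ}
    (hf : ∀ x ∈ K, IsBoundedUnder (· ≤ ·) (𝓝[K] x) f) : BddAbove (f '' K) := by
  refine hK.induction_on (p := fun S => BddAbove (f '' S)) (by simp)
    (fun _ _ hst h => h.mono (image_mono hst))
    (fun _ _ hs ht => by rw [image_union]; exact hs.union ht) fun x hx => ?_
  obtain ⟨B, hB⟩ := hf x hx
  exact ⟨_, hB, B, forall_mem_image.2 fun _ hy => hy⟩

theorem IsCadlagOn.bddAbove_norm_image {d : ℕ} {t : ℝ} {γ : ℝ → E d} (h : IsCadlagOn t γ) :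
    BddAbove ((fun l => ‖γ l‖) '' Icc 0 t) := by
  refine isCompact_Icc.bddAbove_image_of_isBoundedUnder fun s hs => ?_
  obtain ⟨L, hL⟩ : ∃ L, Tendsto γ (𝓝[Icc 0 t ∩ Iio s] s) (𝓝 L) := by
    rcases hs.1.eq_or_lt with rfl | hs0
    · refine ⟨0, ?_⟩
      rw [show Icc 0 t ∩ Iio 0 = ∅ from eq_empty_of_forall_notMem fun l hl => hl.2.not_ge hl.1.1,
        nhdsWithin_empty]
      exact tendsto_bot
    · obtain ⟨L, hL⟩ := h.2 s ⟨hs0, hs.2⟩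
      exact ⟨L, hL.mono_left (nhdsWithin_mono _ inter_subset_right)⟩
  have hR : ContinuousWithinAt γ (Icc 0 t ∩ Ici s) s := by
    rcases hs.2.lt_or_eq with hst | rfl
    · exact (h.1 s ⟨hs.1, hst⟩).mono inter_subset_right
    · exact continuousWithinAt_singleton.mono fun l hl => le_antisymm hl.1.2 hl.2
  have hsplit : Icc 0 t = Icc 0 t ∩ Iio s ∪ Icc 0 t ∩ Ici s := by
    rw [← inter_union_distrib_left, Iio_union_Ici, inter_univ]
  rw [hsplit, nhdsWithin_union, IsBoundedUnder, Filter.map_sup]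
  exact isBounded_sup hL.norm.isBoundedUnder_le hR.norm.isBoundedUnder_le

section SupNorm

variable {d : ℕ} {t : ℝ} {γ η : ℝ → E d}

theorem pairDist_zero_right : pairDist t γ t (fun _ => 0) = supNorm t γ := by
  unfold pairDist supNorm
  rw [max_self]
  exact congrArg sSup (image_congr fun l hl => by simp [min_eq_left hl.2])

theorem norm_le_supNorm (hγ : BddAbove ((fun l => ‖γ l‖) '' Icc 0 t)) {l : ℝ}
    (hl : l ∈ Icc 0 t) : ‖γ l‖ ≤ supNorm t γ :=
  le_csSup hγ ⟨l, hl, rfl⟩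

theorem norm_add_le_supNorm_add (hγ : BddAbove ((fun l => ‖γ l‖) '' Icc 0 t))
    (hη : BddAbove ((fun l => ‖η l‖) '' Icc 0 t)) {l : ℝ} (hl : l ∈ Icc 0 t) :
    ‖γ l + η l‖ ≤ supNorm t γ + supNorm t η :=
  (norm_add_le _ _).trans (add_le_add (norm_le_supNorm hγ hl) (norm_le_supNorm hη hl))

theorem supNorm_add_le (ht : 0 ≤ t) (hγ : BddAbove ((fun l => ‖γ l‖) '' Icc 0 t))
    (hη : BddAbove ((fun l => ‖η l‖) '' Icc 0 t)) :
    supNorm t (fun s => γ s + η s) ≤ supNorm t γ + supNorm t η :=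
  csSup_le ((nonempty_Icc.2 ht).image _)
    (forall_mem_image.2 fun _ hl => norm_add_le_supNorm_add hγ hη hl)

theorem bddAbove_norm_add_image (hγ : BddAbove ((fun l => ‖γ l‖) '' Icc 0 t))
    (hη : BddAbove ((fun l => ‖η l‖) '' Icc 0 t)) :
    BddAbove ((fun l => ‖γ l + η l‖) '' Icc 0 t) :=
  ⟨_, forall_mem_image.2 fun _ hl => norm_add_le_supNorm_add hγ hη hl⟩

end SupNorm

def upsProfile (M x y : ℝ) : ℝ := (x - y) ^ 3 / x ^ 2 + M * y

theorem Ups0_eq_upsProfile {d : ℕ} {t : ℝ} (m : ℕ) (M : ℝ) (γ : ℝ → E d)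
    (h : ‖γ t‖ ≤ supNorm t γ) :
    Ups0 m M t γ = upsProfile M (supNorm t γ ^ (2 * m)) (‖γ t‖ ^ (2 * m)) := by
  unfold Ups0 Ups Sm upsProfile
  rw [pairDist_zero_right, sub_zero]
  split_ifs with h0
  · have hγt : ‖γ t‖ = 0 := le_antisymm (h0 ▸ h) (norm_nonneg _)
    simp [h0, hγt]
  · ring

section Profile

variable {M x y : ℝ}

theorem upsProfile_mul (l : ℝ) : upsProfile M (l * x) (l * y) = l * upsProfile M x y := by
  unfold upsProfile
  rcases eq_or_ne l 0 with rfl | hl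
  · simp
  rcases eq_or_ne x 0 with rfl | hx
  · simp [mul_left_comm]
  field_simp

theorem upsProfile_mono_left (hy : 0 ≤ y) (hyx : y ≤ x) {x' : ℝ} (hxx : x ≤ x') :
    upsProfile M x y ≤ upsProfile M x' y := by
  unfold upsProfile
  gcongr ?_ + _
  rcases (hy.trans hyx).eq_or_lt with h0 | h0
  · obtain rfl : y = 0 := le_antisymm (hyx.trans h0.symm.le) hy
    subst h0
    simpa using by positivity
  have hx' : 0 < x' := h0.trans_le hxx
  have hfactor : ∀ z ≠ 0, (z - y) ^ 3 / z ^ 2 = z * ((z - y) / z) ^ 3 := by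
    intro z hz
    field_simp
  rw [hfactor x h0.ne', hfactor x' hx'.ne', sub_div, sub_div, div_self h0.ne', div_self hx'.ne']
  have hratio : 0 ≤ 1 - y / x := sub_nonneg.2 ((div_le_one h0).2 hyx)
  gcongr

theorem upsProfile_mono_right (hM : 3 ≤ M) (hy : 0 ≤ y) {y' : ℝ} (hyy : y ≤ y') (hyx : y' ≤ x) :
    upsProfile M x y ≤ upsProfile M x y' := by
  unfold upsProfile
  rcases ((hy.trans hyy).trans hyx).eq_or_lt with h0 | h0
  · obtain rfl : y' = 0 := le_antisymm (hyx.trans h0.symm.le) (hy.trans hyy)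
    obtain rfl : y = 0 := le_antisymm hyy hy
    rfl
  have key : (x - y) ^ 3 / x ^ 2 - (x - y') ^ 3 / x ^ 2 ≤ M * y' - M * y := by
    rw [div_sub_div_same, div_le_iff₀ (by positivity)]
    have hd : 0 ≤ y' - y := sub_nonneg.2 hyy
    nlinarith [mul_nonneg hd (mul_nonneg hy (by linarith : (0:ℝ) ≤ 2 * x - y)),
      mul_nonneg hd (mul_nonneg (hy.trans hyy) (by linarith : (0:ℝ) ≤ 2 * x - y')),
      mul_nonneg hd (mul_nonneg hy h0.le),
      mul_nonneg hd (mul_nonneg (hy.trans hyy) (by linarith : (0:ℝ) ≤ x - y)),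
      mul_nonneg (mul_nonneg hd (sq_nonneg x)) (by linarith : (0:ℝ) ≤ M - 3)]
  linarith

theorem add_pow_three_div_add_sq_le {a b x y : ℝ} (ha : 0 ≤ a) (hb : 0 ≤ b) (hx : 0 < x)
    (hy : 0 < y) : (a + b) ^ 3 / (x + y) ^ 2 ≤ a ^ 3 / x ^ 2 + b ^ 3 / y ^ 2 := by
  rw [div_add_div _ _ (by positivity) (by positivity),
    div_le_div_iff₀ (by positivity) (by positivity)]
  nlinarith [mul_nonneg (mul_nonneg hx.le (sq_nonneg (a * y - b * x)))
      (by positivity : (0:ℝ) ≤ 2 * a * y + b * x),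
    mul_nonneg (mul_nonneg hy.le (sq_nonneg (b * x - a * y)))
      (by positivity : (0:ℝ) ≤ 2 * b * x + a * y)]

theorem upsProfile_add_le {x₁ x₂ y₁ y₂ : ℝ} (hy₁ : 0 ≤ y₁) (hy₂ : 0 ≤ y₂) (h₁ : y₁ ≤ x₁)
    (h₂ : y₂ ≤ x₂) :
    upsProfile M (x₁ + x₂) (y₁ + y₂) ≤ upsProfile M x₁ y₁ + upsProfile M x₂ y₂ := by
  unfold upsProfile
  rcases (hy₁.trans h₁).eq_or_lt with hx₁ | hx₁
  · obtain rfl : y₁ = 0 := le_antisymm (h₁.trans hx₁.symm.le) hy₁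
    subst hx₁
    simp
  rcases (hy₂.trans h₂).eq_or_lt with hx₂ | hx₂
  · obtain rfl : y₂ = 0 := le_antisymm (h₂.trans hx₂.symm.le) hy₂
    subst hx₂
    simp
  have := add_pow_three_div_add_sq_le (sub_nonneg.2 h₁) (sub_nonneg.2 h₂) hx₁ hx₂
  rw [add_sub_add_comm]
  linarith

end Profile

theorem pow_le_two_pow_mul_add {a b c : ℝ} (ha : 0 ≤ a) (hb : 0 ≤ b) (hc : 0 ≤ c)
    (habc : a ≤ b + c) (n : ℕ) : a ^ n ≤ 2 ^ (n - 1) * (b ^ n + c ^ n) :=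
  (pow_le_pow_left₀ ha habc n).trans (add_pow_le hb hc n)

theorem upsProfile_le_mul_add {M x₀ x₁ x₂ y₀ y₁ y₂ l : ℝ} (hM : 3 ≤ M) (hl : 0 ≤ l)
    (hy₀ : 0 ≤ y₀) (hy₁ : 0 ≤ y₁) (hy₂ : 0 ≤ y₂) (h₀ : y₀ ≤ x₀) (h₁ : y₁ ≤ x₁) (h₂ : y₂ ≤ x₂)
    (hx : x₀ ≤ l * (x₁ + x₂)) (hy : y₀ ≤ l * (y₁ + y₂)) :
    upsProfile M x₀ y₀ ≤ l * (upsProfile M x₁ y₁ + upsProfile M x₂ y₂) :=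
  calc upsProfile M x₀ y₀
      ≤ upsProfile M (l * (x₁ + x₂)) y₀ := upsProfile_mono_left hy₀ h₀ hx
    _ ≤ upsProfile M (l * (x₁ + x₂)) (l * (y₁ + y₂)) :=
        upsProfile_mono_right hM hy₀ hy (by gcongr)
    _ = l * upsProfile M (x₁ + x₂) (y₁ + y₂) := upsProfile_mul l
    _ ≤ l * (upsProfile M x₁ y₁ + upsProfile M x₂ y₂) :=
        mul_le_mul_of_nonneg_left (upsProfile_add_le hy₁ hy₂ h₁ h₂) hl

theorem ups_subadditive_general
    {d : ℕ} (T : ℝ) (m : ℕ) (M : ℝ) (hM : 3 ≤ M)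
    (t : ℝ) (γ η : ℝ → E d) (hγ : MemHat T 0 t γ) (hη : MemHat T 0 t η) :
    Ups0 m M t (fun s => γ s + η s) ≤ 2 ^ (2*m - 1) * (Ups0 m M t γ + Ups0 m M t η) := by
  have ht : t ∈ Icc 0 t := ⟨hγ.1, le_rfl⟩
  have hγb := hγ.2.2.bddAbove_norm_image
  have hηb := hη.2.2.bddAbove_norm_image
  have hγt := norm_le_supNorm hγb ht
  have hηt := norm_le_supNorm hηb ht
  have hsumt := norm_le_supNorm (γ := fun s => γ s + η s) (bddAbove_norm_add_image hγb hηb) ht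
  rw [Ups0_eq_upsProfile m M γ hγt, Ups0_eq_upsProfile m M η hηt,
    Ups0_eq_upsProfile m M (fun s => γ s + η s) hsumt]
  refine upsProfile_le_mul_add hM (by positivity) (by positivity) (by positivity) (by positivity)
    (pow_le_pow_left₀ (norm_nonneg _) hsumt _) (pow_le_pow_left₀ (norm_nonneg _) hγt _)
    (pow_le_pow_left₀ (norm_nonneg _) hηt _) ?_ ?_
  · exact pow_le_two_pow_mul_add ((norm_nonneg _).trans hsumt) ((norm_nonneg _).trans hγt)
      ((norm_nonneg _).trans hηt) (supNorm_add_le hγ.1 hγb hηb) _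
  · exact pow_le_two_pow_mul_add (norm_nonneg _) (norm_nonneg _) (norm_nonneg _)
      (norm_add_le _ _) _

/-- `Υ^{m,M}(γ_t + η_t) ≤ 2^{2m-1}(Υ^{m,M}(γ_t) + Υ^{m,M}(η_t))`. -/
theorem ups_subadditive
    {d : ℕ} (T : ℝ) (hT : 0 < T) (m : ℕ) (hm : 0 < m) (M : ℝ) (hM : 3 ≤ M)
    (t : ℝ) (γ η : ℝ → E d) (hγ : MemHat T 0 t γ) (hη : MemHat T 0 t η) :
    Ups0 m M t (fun s => γ s + η s) ≤ 2 ^ (2*m - 1) * (Ups0 m M t γ + Ups0 m M t η) :=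
  ups_subadditive_general T m M hM t γ η hγ hη
end PHJB
end
end
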